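/- arXiv:1503.08791 — 3 statements merged into one kernel-verified Lean document; each statement's English description precedes it below -/
import Mathlib

section
/- Let D ⊆ ℂ be the closed unit disc and let q ∈ ℂ with |q| < 1. Let P, R, S, f be bounded functions on D and s a constant with |S(u)| ≤ s < 1 for all u ∈ D. If f(u) = P(u) + R(q u^t) f(1) + S(q u^t) f(q u^t) holds for all u ∈ D, then f(u) = a(u) + b(u)·a(1)/(1 − b(1)) for all u ∈ D, where a(u) = Σ_{j≥0} P(q^{h_j} u^{t^j}) ∏_{i=1}^{j} S(q^{h_i} u^{t^i}) and b(u) = Σ_{j≥1} R(q^{h_j} u^{t^j}) ∏_{i=1}^{j−1} S(q^{h_i} u^{t^i}), provided b(1) ≠ 1. -/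
open scoped BigOperators
open Filter MeasureTheory

noncomputable section

/-- `hp t j = 1 + t + ⋯ + t^(j-1) = (t^j - 1)/(t-1)`. -/
def hp (t j : ℕ) : ℕ := ∑ i ∈ Finset.range j, t ^ i

/-- The series `b(q,u,v,w)`
`b = Σ_{j≥1} v q^{h_j} u^{t^j} w^j/(1−q^{h_j} u^{t^j}) ∏_{i=1}^{j−1} (1−v−q^{h_i}u^{t^i})/(1−q^{h_i}u^{t^i})`. -/
def bGF (t : ℕ) (q u v w : ℂ) : ℂ :=
  ∑' j : ℕ,
    v * q ^ hp t (j + 1) * u ^ t ^ (j + 1) * w ^ (j + 1) /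
        (1 - q ^ hp t (j + 1) * u ^ t ^ (j + 1)) *
      ∏ i ∈ Finset.Icc 1 j,
        (1 - v - q ^ hp t i * u ^ t ^ i) / (1 - q ^ hp t i * u ^ t ^ i)

/-- The series `a(q,u,v,w)` (for canonical forests with `r` roots)
`a = Σ_{j≥0} v q^{r h_j} u^{r t^j} w^j ∏_{i=1}^{j} (1−v−q^{h_i}u^{t^i})/(1−q^{h_i}u^{t^i})`. -/
def aGF (t r : ℕ) (q u v w : ℂ) : ℂ :=
  ∑' j : ℕ,
    v * q ^ (r * hp t j) * u ^ (r * t ^ j) * w ^ j *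
      ∏ i ∈ Finset.Icc 1 j,
        (1 - v - q ^ hp t i * u ^ t ^ i) / (1 - q ^ hp t i * u ^ t ^ i)

/-- A canonical `t`-ary forest with `r` (ordered) roots, encoded by its sequence of
numbers of internal vertices on each level (a canonical forest is uniquely determined
by this sequence: on each level the leaves come first, since outdegrees read from left
to right are non-decreasing).  The number `c_0` of internal vertices on level `0` is at
most `r`, each level's internal-vertex count satisfies `1 ≤ c_{k+1} ≤ t·c_k`, and the
list stops at the last level containing internal vertices. -/
structure CanonicalForest (t r : ℕ) where
  levels : List ℕ
  pos : ∀ c ∈ levels, 0 < c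
  head_le : ∀ c ∈ levels.head?, c ≤ r
  chain : levels.Chain' fun a b => b ≤ t * a

namespace CanonicalForest

variable {t r : ℕ} (T : CanonicalForest t r)

/-- the number `n(T)` of internal vertices -/
def size : ℕ := T.levels.sum

/-- the height `h(T)`: the maximal distance of a leaf from the root level -/
def height : ℕ := T.levels.length

/-- the number of internal vertices at depth `k` -/
def internAt (k : ℕ) : ℕ := T.levels.getD k 0

/-- the number of vertices at depth `k` -/
def vertsAt (k : ℕ) : ℕ := if k = 0 then r else t * T.internAt (k - 1)

/-- the number of leaves at depth `k` -/
def leavesAt (k : ℕ) : ℕ := T.vertsAt k - T.internAt k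

/-- the number `m(T)` of leaves at maximal depth -/
def lastLeaves : ℕ := T.vertsAt T.height

/-- the number `d(T)` of distinct depths at which leaves occur -/
def distinctDepths : ℕ :=
  ((Finset.range (T.height + 1)).filter fun k => 0 < T.leavesAt k).card

/-- the (leaf-)width `w(T)`: the maximal number of leaves on one level -/
def width : ℕ := (Finset.range (T.height + 1)).sup fun k => T.leavesAt k

/-- the total path length `ℓ(T)`: the sum of the depths of all vertices -/
def pathLength : ℕ := ∑ k ∈ Finset.range (T.height + 1), k * T.vertsAt k

end CanonicalForest

/-- the number of canonical `t`-ary forests with `r` roots and `n` internal vertices -/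
def forestCount (t r n : ℕ) : ℕ := Nat.card {T : CanonicalForest t r // T.size = n}

/-- the probability of an event under the uniform distribution on canonical `t`-ary
forests with `r` roots and `n` internal vertices -/
def forestProb (t r n : ℕ) (s : Set (CanonicalForest t r)) : ℝ :=
  (Nat.card {T : CanonicalForest t r // T.size = n ∧ T ∈ s} : ℝ) / forestCount t r n

/-- the expectation of a random variable under the uniform distribution on canonical
`t`-ary forests with `r` roots and `n` internal vertices -/
def forestExp (t r n : ℕ) (f : CanonicalForest t r → ℝ) : ℝ :=
  (∑ᶠ T : {T : CanonicalForest t r // T.size = n}, f T.1) / forestCount t r n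

/-- the variance of a random variable under the uniform distribution on canonical
`t`-ary forests with `r` roots and `n` internal vertices -/
def forestVar (t r n : ℕ) (f : CanonicalForest t r → ℝ) : ℝ :=
  forestExp t r n (fun T => f T ^ 2) - forestExp t r n f ^ 2

/-- the distribution function of the standard normal distribution -/
def stdGaussCDF (x : ℝ) : ℝ :=
  (Real.sqrt (2 * Real.pi))⁻¹ * ∫ u in Set.Iic x, Real.exp (-u ^ 2 / 2)

/-- the density of the standard normal distribution -/
def stdGaussPDF (x : ℝ) : ℝ :=
  (Real.sqrt (2 * Real.pi))⁻¹ * Real.exp (-x ^ 2 / 2)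

/-!
Iterating the equation along the orbit `u, g u, g² u, …` of `g u = q u^t` expresses `f u` as the
`N`-th partial sum of `a u + b u · f 1` plus the remainder `(∏_{i ≤ N} S(gⁱ u)) · f(gᴺ u)`.
Since `g` maps the closed unit disc into itself and `‖S‖ ≤ s < 1` there, the products decay like
`sᴺ`, so both series converge and the remainder vanishes. Thus `f u = a u + b u · f 1`, and taking
`u = 1` gives `f 1 = a 1 / (1 - b 1)`.
-/

section OrbitExpansion

variable {X 𝕜 : Type*} [NormedField 𝕜] {g : X → X} {D : Set X} {S : X → 𝕜} {s : ℝ}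

theorem norm_prod_iterate_le (hg : Set.MapsTo g D D) (hS : ∀ u ∈ D, ‖S u‖ ≤ s)
    {u : X} (hu : u ∈ D) (n : ℕ) :
    ‖∏ i ∈ Finset.Icc 1 n, S (g^[i] u)‖ ≤ s ^ n := calc
  ‖∏ i ∈ Finset.Icc 1 n, S (g^[i] u)‖ = ∏ i ∈ Finset.Icc 1 n, ‖S (g^[i] u)‖ := norm_prod _ _
  _ ≤ ∏ _i ∈ Finset.Icc 1 n, s :=
    Finset.prod_le_prod (fun _ _ => norm_nonneg _) fun i _ => hS _ (hg.iterate i hu)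
  _ = s ^ n := by simp

theorem summable_mul_prod_iterate [CompleteSpace 𝕜] (hg : Set.MapsTo g D D)
    (hS : ∀ u ∈ D, ‖S u‖ ≤ s) (hs : s < 1) {u : X} (hu : u ∈ D) {φ : ℕ → 𝕜} {C : ℝ}
    (hφ : ∀ n, ‖φ n‖ ≤ C) :
    Summable fun n => φ n * ∏ i ∈ Finset.Icc 1 n, S (g^[i] u) := by
  have hs0 : 0 ≤ s := (norm_nonneg _).trans (hS u hu)
  refine .of_norm_bounded ((summable_geometric_of_lt_one hs0 hs).mul_left C) fun n => ?_
  rw [norm_mul]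
  exact mul_le_mul (hφ n) (norm_prod_iterate_le hg hS hu n) (norm_nonneg _)
    ((norm_nonneg _).trans (hφ 0))

variable {P R f : X → 𝕜} {c : 𝕜}

theorem eq_sum_range_add_prod_mul_iterate (hg : Set.MapsTo g D D)
    (heq : ∀ u ∈ D, f u = P u + R (g u) * c + S (g u) * f (g u)) {u : X} (hu : u ∈ D) (N : ℕ) :
    f u = ∑ n ∈ Finset.range N,
        (P (g^[n] u) + R (g^[n + 1] u) * c) * ∏ i ∈ Finset.Icc 1 n, S (g^[i] u) +
      (∏ i ∈ Finset.Icc 1 N, S (g^[i] u)) * f (g^[N] u) := by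
  induction N with
  | zero => simp
  | succ N ih =>
    rw [ih, heq _ (hg.iterate N hu), Finset.sum_range_succ,
      Finset.prod_Icc_succ_top (Nat.le_add_left 1 N), ← Function.iterate_succ_apply' g N]
    ring

theorem eq_tsum_add_tsum_mul_of_eq [CompleteSpace 𝕜] (hg : Set.MapsTo g D D)
    (hS : ∀ u ∈ D, ‖S u‖ ≤ s) (hs : s < 1) {CP CR Cf : ℝ} (hP : ∀ u ∈ D, ‖P u‖ ≤ CP)
    (hR : ∀ u ∈ D, ‖R u‖ ≤ CR) (hf : ∀ u ∈ D, ‖f u‖ ≤ Cf)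
    (heq : ∀ u ∈ D, f u = P u + R (g u) * c + S (g u) * f (g u)) {u : X} (hu : u ∈ D) :
    f u = (∑' n, P (g^[n] u) * ∏ i ∈ Finset.Icc 1 n, S (g^[i] u)) +
      (∑' n, R (g^[n + 1] u) * ∏ i ∈ Finset.Icc 1 n, S (g^[i] u)) * c := by
  have hs0 : 0 ≤ s := (norm_nonneg _).trans (hS u hu)
  have hsumP := summable_mul_prod_iterate hg hS hs hu fun n => hP _ (hg.iterate n hu)
  have hsumR := summable_mul_prod_iterate hg hS hs hu fun n => hR _ (hg.iterate (n + 1) hu)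
  have hsum := hsumP.add (hsumR.mul_right c)
  have hremainder : Tendsto (fun N => (∏ i ∈ Finset.Icc 1 N, S (g^[i] u)) * f (g^[N] u))
      atTop (nhds 0) := by
    refine squeeze_zero_norm (a := fun N => s ^ N * Cf) (fun N => ?_) ?_
    · rw [norm_mul]
      exact mul_le_mul (norm_prod_iterate_le hg hS hu N) (hf _ (hg.iterate N hu))
        (norm_nonneg _) (pow_nonneg hs0 N)
    · simpa using (tendsto_pow_atTop_nhds_zero_of_lt_one hs0 hs).mul_const Cf
  have hpartial : Tendsto (fun N => ∑ n ∈ Finset.range N,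
      (P (g^[n] u) * ∏ i ∈ Finset.Icc 1 n, S (g^[i] u) +
        (R (g^[n + 1] u) * ∏ i ∈ Finset.Icc 1 n, S (g^[i] u)) * c)) atTop (nhds (f u)) := by
    have := (tendsto_const_nhds (x := f u)).sub hremainder
    rw [sub_zero] at this
    refine this.congr fun N => ?_
    rw [eq_sum_range_add_prod_mul_iterate hg heq hu N]
    simp only [add_sub_cancel_right]
    exact Finset.sum_congr rfl fun n _ => by ring
  rw [← tsum_mul_right, ← hsumP.tsum_add (hsumR.mul_right c)]
  exact (hsum.hasSum_iff_tendsto_nat.mpr hpartial).tsum_eq.symm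

end OrbitExpansion

theorem iterate_mul_pow {M : Type*} [CommMonoid M] (q : M) (t j : ℕ) (u : M) :
    (fun v => q * v ^ t)^[j] u = q ^ hp t j * u ^ t ^ j := by
  induction j with
  | zero => simp [hp]
  | succ j ih =>
    rw [Function.iterate_succ_apply', ih, show hp t (j + 1) = t * hp t j + 1 from geom_sum_succ,
      mul_pow, ← pow_mul, ← pow_mul, pow_succ t j, pow_succ', mul_comm t, mul_assoc]

theorem mapsTo_mul_pow_closedBall {𝕜 : Type*} [NormedDivisionRing 𝕜] {q : 𝕜} (hq : ‖q‖ ≤ 1)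
    (t : ℕ) : Set.MapsTo (fun v => q * v ^ t) (Metric.closedBall 0 1) (Metric.closedBall 0 1) := by
  intro u hu
  rw [mem_closedBall_zero_iff] at hu ⊢
  rw [norm_mul, norm_pow]
  exact mul_le_one₀ hq (by positivity) (pow_le_one₀ (norm_nonneg u) hu)

theorem functional_equation_solution_general (t : ℕ) (q : ℂ) (hq : ‖q‖ < 1)
    (P R S f : ℂ → ℂ) (s : ℝ)
    (hP : ∃ C, ∀ u ∈ Metric.closedBall (0 : ℂ) 1, ‖P u‖ ≤ C)
    (hR : ∃ C, ∀ u ∈ Metric.closedBall (0 : ℂ) 1, ‖R u‖ ≤ C)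
    (hf : ∃ C, ∀ u ∈ Metric.closedBall (0 : ℂ) 1, ‖f u‖ ≤ C)
    (hS : ∀ u ∈ Metric.closedBall (0 : ℂ) 1, ‖S u‖ ≤ s) (hs : s < 1)
    (heq : ∀ u ∈ Metric.closedBall (0 : ℂ) 1,
      f u = P u + R (q * u ^ t) * f 1 + S (q * u ^ t) * f (q * u ^ t))
    (a b : ℂ → ℂ)
    (ha : ∀ u : ℂ, a u = ∑' j : ℕ,
      P (q ^ hp t j * u ^ t ^ j) * ∏ i ∈ Finset.Icc 1 j, S (q ^ hp t i * u ^ t ^ i))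
    (hb : ∀ u : ℂ, b u = ∑' j : ℕ,
      R (q ^ hp t (j + 1) * u ^ t ^ (j + 1)) *
        ∏ i ∈ Finset.Icc 1 j, S (q ^ hp t i * u ^ t ^ i))
    (hb1 : b 1 ≠ 1) :
    ∀ u ∈ Metric.closedBall (0 : ℂ) 1, f u = a u + b u * a 1 / (1 - b 1) := by
  obtain ⟨CP, hP⟩ := hP
  obtain ⟨CR, hR⟩ := hR
  obtain ⟨Cf, hf⟩ := hf
  have hexpand : ∀ u ∈ Metric.closedBall (0 : ℂ) 1, f u = a u + b u * f 1 := by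
    intro u hu
    rw [ha, hb]
    simpa only [iterate_mul_pow] using eq_tsum_add_tsum_mul_of_eq
      (mapsTo_mul_pow_closedBall hq.le t) hS hs hP hR hf heq hu
  have hf1 : f 1 = a 1 / (1 - b 1) := by
    rw [eq_div_iff (sub_ne_zero.mpr hb1.symm)]
    linear_combination hexpand 1 (by simp)
  intro u hu
  rw [hexpand u hu, hf1, mul_div_assoc]

/-- The iteration lemma for the functional equation
`f(u) = P(u) + R(q u^t) f(1) + S(q u^t) f(q u^t)` on the closed unit disc. -/
theorem functional_equation_solution (t : ℕ) (ht : 2 ≤ t) (q : ℂ) (hq : ‖q‖ < 1)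
    (P R S f : ℂ → ℂ) (s : ℝ)
    (hP : ∃ C, ∀ u ∈ Metric.closedBall (0 : ℂ) 1, ‖P u‖ ≤ C)
    (hR : ∃ C, ∀ u ∈ Metric.closedBall (0 : ℂ) 1, ‖R u‖ ≤ C)
    (hf : ∃ C, ∀ u ∈ Metric.closedBall (0 : ℂ) 1, ‖f u‖ ≤ C)
    (hS : ∀ u ∈ Metric.closedBall (0 : ℂ) 1, ‖S u‖ ≤ s) (hs : s < 1)
    (heq : ∀ u ∈ Metric.closedBall (0 : ℂ) 1,
      f u = P u + R (q * u ^ t) * f 1 + S (q * u ^ t) * f (q * u ^ t))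
    (a b : ℂ → ℂ)
    (ha : ∀ u : ℂ, a u = ∑' j : ℕ,
      P (q ^ hp t j * u ^ t ^ j) * ∏ i ∈ Finset.Icc 1 j, S (q ^ hp t i * u ^ t ^ i))
    (hb : ∀ u : ℂ, b u = ∑' j : ℕ,
      R (q ^ hp t (j + 1) * u ^ t ^ (j + 1)) *
        ∏ i ∈ Finset.Icc 1 j, S (q ^ hp t i * u ^ t ^ i))
    (hb1 : b 1 ≠ 1) :
    ∀ u ∈ Metric.closedBall (0 : ℂ) 1, f u = a u + b u * a 1 / (1 - b 1) :=
  functional_equation_solution_general t q hq P R S f s hP hR hf hS hs heq a b ha hb hb1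

end
end

section
/- Fix an integer t ≥ 2 and let b(q,u,1,1) = Σ_{j≥1} q^{h_j} u^{t^j}/(1−q^{h_j} u^{t^j}) ∏_{i=1}^{j−1} (−q^{h_i} u^{t^i})/(1−q^{h_i} u^{t^i}) (i.e., b(q,u,v,w) specialized at v = w = 1). Then b(q,u,1,1) = Σ_{j≥1} (−1)^{j−1} ∏_{i=1}^{j} q^{h_i} u^{t^i}/(1−q^{h_i} u^{t^i}), it satisfies the functional equation b(q,u,1,1) = (q u^t/(1 − q u^t))·(1 − b(q, q u^t, 1, 1)), and, regarded as a power series in u, the coefficient [u^j] b(q,u,1,1) vanishes whenever j is not a multiple of t. -/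
open scoped BigOperators
open Filter MeasureTheory

noncomputable section

/-!
With `y_i = q^{h_i}u^{t^i}/(1 - q^{h_i}u^{t^i})`, setting `v = w = 1` turns each factor
`(1 - v - x)/(1 - x)` into `-y_i`, so `b(q,u,1,1) = Σ_{j≥0} (-1)^j y_1 ⋯ y_{j+1}`. Since
`h_{i+1} = h_i + t^i`, substituting `u ↦ q u^t` shifts `y_i` to `y_{i+1}`, and pulling `y_1`
out of the alternating series gives the functional equation; the series converges because
`q^{h_i}u^{t^i} = (q u^{t-1})^{h_i} u` and `h_i ≥ i`. Finally `b(q,u,v,w)` depends on `u`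
only through the powers `u^{t^i}`, `i ≥ 1`, so it is invariant under `u ↦ ζu` for a primitive
`t`-th root of unity `ζ`; hence its `j`-th derivative at `0` equals `ζ^j` times itself.
-/

open Finset Topology

lemma hp_succ (t j : ℕ) : hp t (j + 1) = hp t j + t ^ j := sum_range_succ _ _

lemma le_hp {t : ℕ} (ht : 1 ≤ t) (k : ℕ) : k ≤ hp t k :=
  calc k = ∑ _i ∈ range k, 1 := by simp
    _ ≤ hp t k := sum_le_sum fun i _ => Nat.one_le_pow i t ht

lemma pow_hp_mul_pow_pow_eq {M : Type*} [CommMonoid M] {t : ℕ} (ht : 1 ≤ t) (q u : M) (k : ℕ) :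
    q ^ hp t k * u ^ t ^ k = (q * u ^ (t - 1)) ^ hp t k * u := by
  obtain ⟨s, rfl⟩ := Nat.exists_eq_add_of_le' ht
  rw [← geom_sum_mul_add s k, Nat.add_sub_cancel, pow_succ, pow_mul', mul_pow, hp, mul_assoc]

lemma tendsto_pow_hp_mul_pow_pow {R : Type*} [NormedCommRing R] {t : ℕ} (ht : 1 ≤ t) {q u : R}
    (hqu : ‖q * u ^ (t - 1)‖ < 1) :
    Tendsto (fun k => q ^ hp t k * u ^ t ^ k) atTop (𝓝 0) := by
  simp_rw [pow_hp_mul_pow_pow_eq ht]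
  have := (tendsto_pow_atTop_nhds_zero_of_norm_lt_one hqu).comp
    (tendsto_atTop_mono (le_hp ht) tendsto_id)
  simpa using this.mul_const u

lemma prod_Icc_one_eq_prod_range {M : Type*} [CommMonoid M] (f : ℕ → M) (n : ℕ) :
    ∏ i ∈ Icc 1 n, f i = ∏ i ∈ range n, f (i + 1) := by
  rw [← Ico_add_one_right_eq_Icc, prod_Ico_eq_prod_range]
  simp [add_comm]

section AlternatingProducts

variable {𝕜 : Type*}

lemma summable_alternating_prod_range [NormedField 𝕜] [CompleteSpace 𝕜] {y : ℕ → 𝕜}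
    (hy : Tendsto y atTop (𝓝 0)) :
    Summable fun j => (-1 : 𝕜) ^ j * ∏ i ∈ range (j + 1), y i := by
  refine summable_of_ratio_norm_eventually_le (r := 1 / 2) (by norm_num) ?_
  have hsmall : ∀ᶠ n in atTop, ‖y n‖ ≤ 1 / 2 :=
    (tendsto_zero_iff_norm_tendsto_zero.mp hy).eventually_le_const (by norm_num)
  filter_upwards [(tendsto_add_atTop_nat 1).eventually hsmall] with n hn
  rw [prod_range_succ _ (n + 1), pow_succ, mul_neg_one, neg_mul, norm_neg, ← mul_assoc, norm_mul,
    mul_comm (1 / 2 : ℝ)]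
  exact mul_le_mul_of_nonneg_left hn (norm_nonneg _)

lemma tsum_alternating_prod_range_eq [Field 𝕜] [TopologicalSpace 𝕜] [IsTopologicalRing 𝕜]
    [T2Space 𝕜] {y : ℕ → 𝕜} (hy : Summable fun j => (-1 : 𝕜) ^ j * ∏ i ∈ range (j + 1), y i) :
    ∑' j, (-1 : 𝕜) ^ j * ∏ i ∈ range (j + 1), y i
      = y 0 * (1 - ∑' j, (-1 : 𝕜) ^ j * ∏ i ∈ range (j + 1), y (i + 1)) := by
  have hterm : ∀ j, (-1 : 𝕜) ^ (j + 1) * ∏ i ∈ range (j + 1 + 1), y i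
      = -y 0 * ((-1) ^ j * ∏ i ∈ range (j + 1), y (i + 1)) := fun j => by
    rw [prod_range_succ' _ (j + 1)]; ring
  rw [hy.tsum_eq_zero_add, tsum_congr hterm, tsum_mul_left]
  simp only [pow_zero, zero_add, range_one, prod_singleton, one_mul, neg_mul]
  ring

end AlternatingProducts

section Derivatives

variable {𝕜 E : Type*} [NontriviallyNormedField 𝕜] [NormedAddCommGroup E] [NormedSpace 𝕜 E]

lemma iteratedDeriv_comp_mul_left (n : ℕ) (f : 𝕜 → E) (c x : 𝕜) :
    iteratedDeriv n (fun x => f (c * x)) x = c ^ n • iteratedDeriv n f (c * x) := by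
  induction n generalizing x with
  | zero => simp
  | succ n ih =>
    rw [iteratedDeriv_succ, iteratedDeriv_succ, funext ih, deriv_fun_const_smul_field,
      deriv_comp_mul_left, smul_smul, pow_succ]

lemma iteratedDeriv_zero_eq_zero_of_comp_mul_eq {f : 𝕜 → E} {c : 𝕜} {n : ℕ}
    (hf : ∀ z, f (c * z) = f z) (hc : c ^ n ≠ 1) : iteratedDeriv n f 0 = 0 := by
  have h := iteratedDeriv_comp_mul_left n f c 0
  rw [funext hf, mul_zero, eq_comm, ← sub_eq_zero, ← one_smul 𝕜 (iteratedDeriv n f 0), smul_smul,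
    mul_one, ← sub_smul, smul_eq_zero] at h
  exact h.resolve_left (sub_ne_zero.mpr hc)

end Derivatives

def bFactor (t : ℕ) (q u : ℂ) (i : ℕ) : ℂ :=
  q ^ hp t i * u ^ t ^ i / (1 - q ^ hp t i * u ^ t ^ i)

lemma bFactor_one (t : ℕ) (q u : ℂ) : bFactor t q u 1 = q * u ^ t / (1 - q * u ^ t) := by
  simp [bFactor, hp]

lemma bFactor_shift (t : ℕ) (q u : ℂ) (i : ℕ) :
    bFactor t q (q * u ^ t) i = bFactor t q u (i + 1) := by
  have h : q ^ hp t i * (q * u ^ t) ^ t ^ i = q ^ hp t (i + 1) * u ^ t ^ (i + 1) := by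
    rw [hp_succ, pow_add, mul_pow, ← pow_mul, ← pow_succ']
    ring
  rw [bFactor, bFactor, h]

lemma tendsto_bFactor {t : ℕ} (ht : 1 ≤ t) {q u : ℂ} (hqu : ‖q * u ^ (t - 1)‖ < 1) :
    Tendsto (bFactor t q u) atTop (𝓝 0) := by
  have hx := tendsto_pow_hp_mul_pow_pow ht hqu
  have h := hx.div (tendsto_const_nhds (x := (1 : ℂ)) |>.sub hx) (by simp)
  rwa [sub_zero, zero_div] at h

lemma bGF_one_one (t : ℕ) (q u : ℂ) :
    bGF t q u 1 1 = ∑' j : ℕ, (-1 : ℂ) ^ j * ∏ i ∈ Icc 1 (j + 1), bFactor t q u i := by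
  refine tsum_congr fun j => ?_
  have hneg : ∀ i ∈ Icc 1 j, (1 - 1 - q ^ hp t i * u ^ t ^ i) / (1 - q ^ hp t i * u ^ t ^ i)
      = -1 * bFactor t q u i := fun i _ => by rw [bFactor]; ring
  rw [prod_congr rfl hneg, prod_mul_distrib, prod_const, Nat.card_Icc, Nat.add_sub_cancel,
    prod_Icc_succ_top (Nat.le_add_left 1 j), bFactor]
  ring

lemma bGF_one_one_eq_tsum_range (t : ℕ) (q u : ℂ) :
    bGF t q u 1 1 = ∑' j : ℕ, (-1 : ℂ) ^ j * ∏ i ∈ range (j + 1), bFactor t q u (i + 1) := by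
  simp only [bGF_one_one, prod_Icc_one_eq_prod_range]

lemma bGF_one_one_functional_eq {t : ℕ} (ht : 1 ≤ t) {q u : ℂ} (hqu : ‖q * u ^ (t - 1)‖ < 1) :
    bGF t q u 1 1 = q * u ^ t / (1 - q * u ^ t) * (1 - bGF t q (q * u ^ t) 1 1) := by
  have hy : Tendsto (fun i => bFactor t q u (i + 1)) atTop (𝓝 0) :=
    (tendsto_bFactor ht hqu).comp (tendsto_add_atTop_nat 1)
  rw [bGF_one_one_eq_tsum_range,
    tsum_alternating_prod_range_eq (summable_alternating_prod_range hy),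
    bGF_one_one_eq_tsum_range, zero_add, bFactor_one]
  simp only [bFactor_shift]

lemma bGF_mul_left_of_pow_eq_one {t : ℕ} {ζ : ℂ} (hζ : ζ ^ t = 1) (q u v w : ℂ) :
    bGF t q (ζ * u) v w = bGF t q u v w := by
  have hpow : ∀ i ≠ 0, (ζ * u) ^ t ^ i = u ^ t ^ i := fun i hi => by
    obtain ⟨m, hm⟩ := dvd_pow_self t hi
    rw [mul_pow, hm, pow_mul, hζ, one_pow, one_mul]
  refine tsum_congr fun j => ?_
  rw [hpow _ j.succ_ne_zero]
  congr 1
  exact prod_congr rfl fun i hi => by rw [hpow i (by grind)]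

lemma iteratedDeriv_bGF_eq_zero {t j : ℕ} (ht : t ≠ 0) (hj : ¬ t ∣ j) (q v w : ℂ) :
    iteratedDeriv j (fun z : ℂ => bGF t q z v w) 0 = 0 := by
  have hζ := Complex.isPrimitiveRoot_exp t ht
  exact iteratedDeriv_zero_eq_zero_of_comp_mul_eq
    (fun z => bGF_mul_left_of_pow_eq_one hζ.pow_eq_one q z v w)
    (fun h => hj ((hζ.pow_eq_one_iff_dvd j).mp h))

theorem bGF_specialization_v_w_one_general (t : ℕ) (ht : 2 ≤ t) (q u : ℂ)
    (hqu : ‖q * u ^ (t - 1)‖ < 1) :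
    bGF t q u 1 1
        = ∑' j : ℕ, (-1 : ℂ) ^ j *
            ∏ i ∈ Finset.Icc 1 (j + 1),
              q ^ hp t i * u ^ t ^ i / (1 - q ^ hp t i * u ^ t ^ i)
    ∧ bGF t q u 1 1 = q * u ^ t / (1 - q * u ^ t) * (1 - bGF t q (q * u ^ t) 1 1)
    ∧ ∀ j : ℕ, ¬ t ∣ j → iteratedDeriv j (fun z : ℂ => bGF t q z 1 1) 0 = 0 :=
  ⟨bGF_one_one t q u, bGF_one_one_functional_eq (by omega) hqu,
    fun _ hj => iteratedDeriv_bGF_eq_zero (by omega) hj q 1 1⟩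

/-- The specialization `b(q,u,1,1)` equals the alternating series
`Σ_{j≥1} (−1)^{j−1} ∏_{i=1}^{j} q^{h_i}u^{t^i}/(1−q^{h_i}u^{t^i})`, satisfies the
functional equation `b(q,u,1,1) = qu^t/(1−qu^t)·(1 − b(q,qu^t,1,1))`, and its power-series
coefficient `[u^j] b(q,u,1,1)` vanishes whenever `t ∤ j`. -/
theorem bGF_specialization_v_w_one (t : ℕ) (ht : 2 ≤ t) (q u : ℂ)
    (hq : ‖q‖ < 1) (hqu : ‖q * u ^ (t - 1)‖ < 1) :
    bGF t q u 1 1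
        = ∑' j : ℕ, (-1 : ℂ) ^ j *
            ∏ i ∈ Finset.Icc 1 (j + 1),
              q ^ hp t i * u ^ t ^ i / (1 - q ^ hp t i * u ^ t ^ i)
    ∧ bGF t q u 1 1 = q * u ^ t / (1 - q * u ^ t) * (1 - bGF t q (q * u ^ t) 1 1)
    ∧ ∀ j : ℕ, ¬ t ∣ j → iteratedDeriv j (fun z : ℂ => bGF t q z 1 1) 0 = 0 :=
  bGF_specialization_v_w_one_general t ht q u hqu

end
end

section
/- Fix an integer t ≥ 5 and set D(q,w) = 1 − b(q,1,1,w) = Σ_{j≥0} (−1)^j w^j ∏_{i=1}^{j} q^{h_i}/(1−q^{h_i}). For every w ∈ ℂ with |w − 1| ≤ 1/2 − 5·(2/3)^t, the function q ↦ D(q,w) has exactly one zero in the open disc |q| < 2/3 and no zero on the circle |q| = 2/3. -/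
open scoped BigOperators
open Filter MeasureTheory

noncomputable section

/-- the denominator `D(q,w) = 1 − b(q,1,1,w) = Σ_{j≥0} (−1)^j w^j ∏_{i=1}^{j} q^{h_i}/(1−q^{h_i})` -/
def DGF (t : ℕ) (q w : ℂ) : ℂ :=
  ∑' j : ℕ, (-1 : ℂ) ^ j * w ^ j * ∏ i ∈ Finset.Icc 1 j, q ^ hp t i / (1 - q ^ hp t i)

/-!
Write `g_n(q) = q^n/(1-q^n)` (`powRatio n q`). Splitting off the factor `i = 1` gives
`D = 1 - w g_1(q) E(q)` with `E = Σ_j (-w)^j ∏_{k<j} g_{h_{k+2}}(q)` (`denomTail`), so on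
`|q| ≤ 2/3` the equation `D = 0` becomes the fixed-point equation `q = 1/(1 + w E(q))` (`rootMap`).
For `i ≥ 2` the exponent `h_i ≥ t + 1` is large, so `E` is within `2·(2/3)^t` of `1` and is
`13/10`-Lipschitz in `q`. The hypothesis on `w` then forces `|1 + w E| > 3/2`, so
`q ↦ 1/(1 + w E(q))` maps the closed disc of radius `2/3` into the open one and contracts it with
constant `(3/2)·(13/10)/(3/2)^2 = 13/15`; Banach's fixed-point theorem finishes the proof.
-/

open Finset Metric Function

open scoped NNReal

lemma hp_one (t : ℕ) : hp t 1 = 1 := by simp [hp]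

lemma hp_two (t : ℕ) : hp t 2 = t + 1 := by simp [hp, sum_range_succ, add_comm]

lemma hp_monotone (t : ℕ) : Monotone (hp t) := fun _ _ h =>
  sum_le_sum_of_subset (range_subset_range.2 h)

lemma succ_le_hp {t i : ℕ} (hi : 2 ≤ i) : t + 1 ≤ hp t i := hp_two t ▸ hp_monotone t hi

lemma natCast_mul_pow_pred_le {r : ℝ} (hr : 0 ≤ r) {m n : ℕ} (hm : 1 ≤ m)
    (hmr : (m + 1) * r ≤ m) (hmn : m ≤ n) : (n : ℝ) * r ^ (n - 1) ≤ m * r ^ (m - 1) := by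
  induction n, hmn using Nat.le_induction with
  | base => exact le_rfl
  | succ n hmn ih =>
    obtain ⟨k, rfl⟩ : ∃ k, n = k + 1 := ⟨n - 1, by omega⟩
    have hmk : (m : ℝ) ≤ k + 1 := by exact_mod_cast hmn
    have hstep : ((k : ℝ) + 2) * r ≤ k + 1 := by nlinarith
    calc ((k + 1 + 1 : ℕ) : ℝ) * r ^ (k + 1 + 1 - 1) = ((k : ℝ) + 2) * r * r ^ k := by
          push_cast; ring
      _ ≤ ((k : ℝ) + 1) * r ^ k := mul_le_mul_of_nonneg_right hstep (by positivity)
      _ = ((k + 1 : ℕ) : ℝ) * r ^ (k + 1 - 1) := by push_cast; ring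
      _ ≤ m * r ^ (m - 1) := ih

section NormedField

variable {𝕜 : Type*} [NormedField 𝕜]

lemma norm_prod_range_sub_prod_range_le {f g : ℕ → 𝕜} {m δ : ℝ} (hf : ∀ k, ‖f k‖ ≤ m)
    (hg : ∀ k, ‖g k‖ ≤ m) (hfg : ∀ k, ‖f k - g k‖ ≤ δ) (n : ℕ) :
    ‖∏ k ∈ range n, f k - ∏ k ∈ range n, g k‖ ≤ n * m ^ (n - 1) * δ := by
  have hm : 0 ≤ m := (norm_nonneg _).trans (hf 0)
  have hδ : 0 ≤ δ := (norm_nonneg _).trans (hfg 0)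
  induction n with
  | zero => simp
  | succ n ih =>
    have hprod_g : ‖∏ k ∈ range n, g k‖ ≤ m ^ n := by
      rw [norm_prod]
      exact (prod_le_prod (fun _ _ => norm_nonneg _) fun k _ => hg k).trans_eq (by simp)
    have hpow : (n : ℝ) * m ^ (n - 1) * m = n * m ^ n := by
      cases n <;> simp [pow_succ, mul_assoc]
    rw [prod_range_succ, prod_range_succ,
      show ∀ a b c d : 𝕜, a * c - b * d = (a - b) * c + b * (c - d) by intros; ring]
    calc _ ≤ ‖∏ k ∈ range n, f k - ∏ k ∈ range n, g k‖ * ‖f n‖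
          + ‖∏ k ∈ range n, g k‖ * ‖f n - g n‖ := by
          grw [norm_add_le, norm_mul, norm_mul]
      _ ≤ n * m ^ (n - 1) * δ * m + m ^ n * δ := by gcongr; exacts [hf n, hfg n]
      _ = ((n + 1 : ℕ) : ℝ) * m ^ (n + 1 - 1) * δ := by
          rw [mul_right_comm _ δ, hpow]; push_cast; ring

lemma norm_pow_sub_pow_le {x y : 𝕜} {r : ℝ} (hx : ‖x‖ ≤ r) (hy : ‖y‖ ≤ r) (n : ℕ) :
    ‖x ^ n - y ^ n‖ ≤ n * r ^ (n - 1) * ‖x - y‖ := by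
  simpa using norm_prod_range_sub_prod_range_le (f := fun _ => x) (g := fun _ => y)
    (fun _ => hx) (fun _ => hy) (fun _ => le_rfl) n

def powRatio (n : ℕ) (q : 𝕜) : 𝕜 := q ^ n / (1 - q ^ n)

lemma one_sub_pow_le_norm_one_sub_pow {q : 𝕜} {r : ℝ} (hq : ‖q‖ ≤ r) (n : ℕ) :
    1 - r ^ n ≤ ‖1 - q ^ n‖ := by
  have hqn : ‖q ^ n‖ ≤ r ^ n := by
    rw [norm_pow]; exact pow_le_pow_left₀ (norm_nonneg q) hq n
  have := norm_sub_norm_le (1 : 𝕜) (q ^ n)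
  rw [norm_one] at this
  linarith

lemma norm_powRatio_le {q : 𝕜} {r : ℝ} (hq : ‖q‖ ≤ r) {n : ℕ} (hrn : r ^ n < 1) :
    ‖powRatio n q‖ ≤ r ^ n / (1 - r ^ n) := by
  have hr : 0 ≤ r := (norm_nonneg q).trans hq
  rw [powRatio, norm_div, norm_pow]
  exact div_le_div₀ (by positivity) (pow_le_pow_left₀ (norm_nonneg q) hq n) (by linarith)
    (one_sub_pow_le_norm_one_sub_pow hq n)

lemma norm_powRatio_sub_powRatio_le {x y : 𝕜} {r : ℝ} (hx : ‖x‖ ≤ r) (hy : ‖y‖ ≤ r) {n : ℕ}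
    (hrn : r ^ n < 1) :
    ‖powRatio n x - powRatio n y‖ ≤ n * r ^ (n - 1) / (1 - r ^ n) ^ 2 * ‖x - y‖ := by
  have hr : 0 ≤ r := (norm_nonneg x).trans hx
  have hx' := one_sub_pow_le_norm_one_sub_pow hx n
  have hy' := one_sub_pow_le_norm_one_sub_pow hy n
  have hx0 : 1 - x ^ n ≠ 0 := norm_pos_iff.1 (by linarith)
  have hy0 : 1 - y ^ n ≠ 0 := norm_pos_iff.1 (by linarith)
  have hsub : powRatio n x - powRatio n y = (x ^ n - y ^ n) / ((1 - x ^ n) * (1 - y ^ n)) := by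
    rw [powRatio, powRatio]; field_simp; ring
  rw [hsub, norm_div, norm_mul]
  calc _ ≤ n * r ^ (n - 1) * ‖x - y‖ / ((1 - r ^ n) * (1 - r ^ n)) :=
        div_le_div₀ (by positivity) (norm_pow_sub_pow_le hx hy n) (by nlinarith)
          (mul_le_mul hx' hy' (by linarith) (norm_nonneg _))
    _ = _ := by ring

lemma two_thirds_pow_le_of_seven_le {n : ℕ} (hn : 7 ≤ n) : (2 / 3 : ℝ) ^ n ≤ 1 / 16 :=
  (pow_le_pow_of_le_one (by norm_num) (by norm_num) hn).trans (by norm_num)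

lemma norm_powRatio_le_of_seven_le {q : 𝕜} (hq : ‖q‖ ≤ 2 / 3) {n : ℕ} (hn : 7 ≤ n) :
    ‖powRatio n q‖ ≤ 16 / 15 * (2 / 3) ^ n := by
  have hsmall := two_thirds_pow_le_of_seven_le hn
  have hpos : (0 : ℝ) < (2 / 3) ^ n := by positivity
  refine (norm_powRatio_le hq (by linarith)).trans ?_
  rw [div_le_iff₀ (by linarith)]
  nlinarith

lemma norm_powRatio_sub_powRatio_le_of_seven_le {x y : 𝕜} (hx : ‖x‖ ≤ 2 / 3)
    (hy : ‖y‖ ≤ 2 / 3) {n : ℕ} (hn : 7 ≤ n) :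
    ‖powRatio n x - powRatio n y‖ ≤ 7 / 10 * ‖x - y‖ := by
  have hsmall := two_thirds_pow_le_of_seven_le hn
  refine (norm_powRatio_sub_powRatio_le hx hy (by linarith)).trans
    (mul_le_mul_of_nonneg_right ?_ (norm_nonneg _))
  have hdecay := natCast_mul_pow_pred_le (r := 2 / 3) (by norm_num) (by norm_num : 1 ≤ 7)
    (by norm_num) hn
  calc (n : ℝ) * (2 / 3) ^ (n - 1) / (1 - (2 / 3) ^ n) ^ 2
      ≤ (7 : ℕ) * (2 / 3) ^ (7 - 1) / (15 / 16) ^ 2 :=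
        div_le_div₀ (by positivity) hdecay (by norm_num)
          (pow_le_pow_left₀ (by norm_num) (by linarith) 2)
    _ ≤ 7 / 10 := by norm_num

def altProdTerm (w : 𝕜) (c : ℕ → 𝕜) (j : ℕ) : 𝕜 := (-w) ^ j * ∏ k ∈ range j, c k

def altProdSeries (w : 𝕜) (c : ℕ → 𝕜) : 𝕜 := ∑' j, altProdTerm w c j

variable {w : 𝕜} {c c' : ℕ → 𝕜} {m : ℝ}

@[simp]
lemma altProdTerm_zero : altProdTerm w c 0 = 1 := by simp [altProdTerm]

lemma altProdTerm_succ (j : ℕ) :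
    altProdTerm w c (j + 1) = -w * c 0 * altProdTerm w (fun k => c (k + 1)) j := by
  rw [altProdTerm, altProdTerm, pow_succ', prod_range_succ']
  ring

lemma norm_altProdTerm_le (hc : ∀ k, ‖c k‖ ≤ m) (j : ℕ) :
    ‖altProdTerm w c j‖ ≤ (‖w‖ * m) ^ j := by
  rw [altProdTerm, norm_mul, norm_pow, norm_neg, norm_prod, mul_pow]
  gcongr
  exact (prod_le_prod (fun _ _ => norm_nonneg _) fun k _ => hc k).trans_eq (by simp)

lemma summable_altProdTerm [CompleteSpace 𝕜] (hc : ∀ k, ‖c k‖ ≤ m) (hwm : ‖w‖ * m < 1) :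
    Summable (altProdTerm w c) :=
  have hm : 0 ≤ m := (norm_nonneg _).trans (hc 0)
  Summable.of_norm_bounded (summable_geometric_of_lt_one (by positivity) hwm)
    (norm_altProdTerm_le hc)

lemma altProdSeries_eq_one_sub (h : Summable (altProdTerm w fun k => c (k + 1))) :
    altProdSeries w c = 1 - w * c 0 * altProdSeries w (fun k => c (k + 1)) := by
  have hs : Summable (altProdTerm w c) := by
    rw [← summable_nat_add_iff 1]
    simp_rw [altProdTerm_succ]
    exact h.mul_left _
  rw [altProdSeries, hs.tsum_eq_zero_add, altProdTerm_zero]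
  simp_rw [altProdTerm_succ]
  rw [tsum_mul_left, altProdSeries]
  ring

lemma norm_altProdSeries_le (hc : ∀ k, ‖c k‖ ≤ m) (hwm : ‖w‖ * m < 1) :
    ‖altProdSeries w c‖ ≤ (1 - ‖w‖ * m)⁻¹ :=
  have hm : 0 ≤ m := (norm_nonneg _).trans (hc 0)
  tsum_of_norm_bounded (hasSum_geometric_of_lt_one (by positivity) hwm) (norm_altProdTerm_le hc)

lemma norm_altProdSeries_sub_one_le [CompleteSpace 𝕜] (hc : ∀ k, ‖c k‖ ≤ m)
    (hwm : ‖w‖ * m < 1) : ‖altProdSeries w c - 1‖ ≤ ‖w‖ * ‖c 0‖ / (1 - ‖w‖ * m) := by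
  have hc_succ : ∀ k, ‖c (k + 1)‖ ≤ m := fun k => hc (k + 1)
  rw [altProdSeries_eq_one_sub (summable_altProdTerm hc_succ hwm), sub_sub_cancel_left,
    norm_neg, norm_mul, norm_mul, div_eq_mul_inv]
  exact mul_le_mul_of_nonneg_left (norm_altProdSeries_le hc_succ hwm) (by positivity)

lemma norm_altProdSeries_sub_altProdSeries_le [CompleteSpace 𝕜] {δ : ℝ}
    (hc : ∀ k, ‖c k‖ ≤ m) (hc' : ∀ k, ‖c' k‖ ≤ m) (hcc' : ∀ k, ‖c k - c' k‖ ≤ δ)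
    (hwm : ‖w‖ * m < 1) :
    ‖altProdSeries w c - altProdSeries w c'‖ ≤ ‖w‖ * δ / (1 - ‖w‖ * m) ^ 2 := by
  have hm : 0 ≤ m := (norm_nonneg _).trans (hc 0)
  set x := ‖w‖ * m
  have hterm (j : ℕ) :
      ‖altProdTerm w c j - altProdTerm w c' j‖ ≤ ‖w‖ * δ * (j * x ^ (j - 1)) := by
    rw [altProdTerm, altProdTerm, ← mul_sub, norm_mul, norm_pow, norm_neg]
    grw [norm_prod_range_sub_prod_range_le hc hc' hcc' j]
    rcases j with _ | j
    · simp
    · rw [Nat.add_sub_cancel, mul_pow]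
      push_cast
      exact le_of_eq (by ring)
  have hsum : HasSum (fun j : ℕ => (j : ℝ) * x ^ (j - 1)) (1 / (1 - x) ^ 2) := by
    rw [← hasSum_nat_add_iff' 1]
    simpa [Nat.choose_one_right, add_comm] using
      hasSum_choose_mul_geometric_of_norm_lt_one 1 (r := x)
        (by rwa [Real.norm_of_nonneg (by positivity)])
  rw [altProdSeries, altProdSeries, ← (summable_altProdTerm hc hwm).tsum_sub
    (summable_altProdTerm hc' hwm), div_eq_mul_one_div]
  exact tsum_of_norm_bounded (hsum.mul_left _) hterm

end NormedField

theorem exists_unique_isFixedPt_of_mapsTo_ball {α : Type*} [MetricSpace α] [CompleteSpace α]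
    {f : α → α} {a : α} {r : ℝ} {K : ℝ≥0} (hr : 0 ≤ r) (hK : K < 1)
    (hf : LipschitzOnWith K f (closedBall a r)) (hmaps : Set.MapsTo f (closedBall a r) (ball a r)) :
    ∃! x, x ∈ ball a r ∧ IsFixedPt f x := by
  have hsf : Set.MapsTo f (closedBall a r) (closedBall a r) :=
    hmaps.mono_right ball_subset_closedBall
  obtain ⟨x, hx, hfix, -⟩ := ContractingWith.exists_fixedPoint' isClosed_closedBall.isComplete
    hsf ⟨hK, hf.mapsToRestrict hsf⟩ (mem_closedBall_self hr) (edist_ne_top _ _)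
  refine ⟨x, ⟨hfix.eq ▸ hmaps hx, hfix⟩, fun y ⟨hy, hfy⟩ => ?_⟩
  have hyx : dist y x ≤ K * dist y x := by
    simpa only [hfy.eq, hfix.eq] using hf.dist_le_mul y (ball_subset_closedBall hy) x hx
  have hK' : (K : ℝ) < 1 := by exact_mod_cast hK
  exact dist_le_zero.1 (by nlinarith [dist_nonneg (x := y) (y := x)])

lemma DGF_eq_altProdSeries (t : ℕ) (q w : ℂ) :
    DGF t q w = altProdSeries w fun k => powRatio (hp t (k + 1)) q := by
  refine tsum_congr fun j => ?_
  rw [altProdTerm, neg_pow w, range_eq_Ico, prod_Ico_add' (fun i => powRatio (hp t i) q) 0 j 1,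
    zero_add, Ico_add_one_right_eq_Icc]
  rfl

def denomTail (t : ℕ) (w q : ℂ) : ℂ := altProdSeries w fun k => powRatio (hp t (k + 2)) q

section DenomTail

variable {t : ℕ} {w q q' : ℂ}

lemma norm_powRatio_hp_le (ht : 6 ≤ t) (hq : ‖q‖ ≤ 2 / 3) {i : ℕ} (hi : 2 ≤ i) :
    ‖powRatio (hp t i) q‖ ≤ 16 / 15 * (2 / 3) ^ (t + 1) := by
  have hti := succ_le_hp (t := t) hi
  refine (norm_powRatio_le_of_seven_le hq (by omega)).trans ?_
  exact mul_le_mul_of_nonneg_left (pow_le_pow_of_le_one (by norm_num) (by norm_num) hti)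
    (by norm_num)

lemma norm_powRatio_hp_le_one_div_sixteen (ht : 6 ≤ t) (hq : ‖q‖ ≤ 2 / 3) {i : ℕ}
    (hi : 2 ≤ i) : ‖powRatio (hp t i) q‖ ≤ 1 / 16 := by
  refine (norm_powRatio_hp_le ht hq hi).trans ?_
  calc (16 / 15 : ℝ) * (2 / 3) ^ (t + 1) ≤ 16 / 15 * (2 / 3) ^ 7 :=
        mul_le_mul_of_nonneg_left (pow_le_pow_of_le_one (by norm_num) (by norm_num)
          (by omega)) (by norm_num)
    _ ≤ 1 / 16 := by norm_num

lemma summable_denomTail_terms (ht : 6 ≤ t) (hw : ‖w‖ ≤ 3 / 2) (hq : ‖q‖ ≤ 2 / 3) :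
    Summable (altProdTerm w fun k => powRatio (hp t (k + 2)) q) :=
  summable_altProdTerm (fun k => norm_powRatio_hp_le_one_div_sixteen ht hq (by omega))
    (by linarith)

lemma DGF_eq_one_sub_mul_denomTail (ht : 6 ≤ t) (hw : ‖w‖ ≤ 3 / 2) (hq : ‖q‖ ≤ 2 / 3) :
    DGF t q w = 1 - w * (q / (1 - q)) * denomTail t w q := by
  rw [DGF_eq_altProdSeries, altProdSeries_eq_one_sub (c := fun k => powRatio (hp t (k + 1)) q)
    (summable_denomTail_terms ht hw hq), zero_add, hp_one, powRatio, pow_one]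
  rfl

lemma norm_denomTail_sub_one_le (ht : 6 ≤ t) (hw : ‖w‖ ≤ 3 / 2) (hq : ‖q‖ ≤ 2 / 3) :
    ‖denomTail t w q - 1‖ ≤ 2 * (2 / 3) ^ t := by
  have hwm : ‖w‖ * (1 / 16) ≤ 3 / 32 := by linarith
  refine (norm_altProdSeries_sub_one_le
    (fun k => norm_powRatio_hp_le_one_div_sixteen ht hq (by omega)) (by linarith)).trans ?_
  have hc0 := norm_powRatio_hp_le ht hq (le_refl 2)
  rw [div_le_iff₀ (by linarith)]
  calc ‖w‖ * ‖powRatio (hp t (0 + 2)) q‖ ≤ 3 / 2 * (16 / 15 * (2 / 3) ^ (t + 1)) := by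
        gcongr
    _ ≤ 2 * (2 / 3) ^ t * (1 - 3 / 32) := by
        rw [pow_succ]; nlinarith [pow_pos (by norm_num : (0 : ℝ) < 2 / 3) t]
    _ ≤ 2 * (2 / 3) ^ t * (1 - ‖w‖ * (1 / 16)) := by gcongr

lemma norm_denomTail_sub_denomTail_le (ht : 6 ≤ t) (hw : ‖w‖ ≤ 3 / 2) (hq : ‖q‖ ≤ 2 / 3)
    (hq' : ‖q'‖ ≤ 2 / 3) : ‖denomTail t w q - denomTail t w q'‖ ≤ 13 / 10 * ‖q - q'‖ := by
  have hwm : ‖w‖ * (1 / 16) ≤ 3 / 32 := by linarith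
  refine (norm_altProdSeries_sub_altProdSeries_le
    (fun k => norm_powRatio_hp_le_one_div_sixteen ht hq (by omega))
    (fun k => norm_powRatio_hp_le_one_div_sixteen ht hq' (by omega))
    (fun k => norm_powRatio_sub_powRatio_le_of_seven_le hq hq'
      ((by omega : 7 ≤ t + 1).trans (succ_le_hp (by omega))))
    (by linarith)).trans ?_
  rw [div_le_iff₀ (by nlinarith)]
  calc ‖w‖ * (7 / 10 * ‖q - q'‖) ≤ 3 / 2 * (7 / 10 * ‖q - q'‖) := by gcongr
    _ ≤ 13 / 10 * ‖q - q'‖ * (1 - 3 / 32) ^ 2 := by nlinarith [norm_nonneg (q - q')]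
    _ ≤ 13 / 10 * ‖q - q'‖ * (1 - ‖w‖ * (1 / 16)) ^ 2 := by gcongr

end DenomTail

section RootMap

variable {t : ℕ} {w q q' : ℂ}

lemma six_le_of_norm_sub_one_le (hw : ‖w - 1‖ ≤ 1 / 2 - 5 * (2 / 3 : ℝ) ^ t) : 6 ≤ t := by
  by_contra! ht
  have hpow : (2 / 3 : ℝ) ^ 5 ≤ (2 / 3) ^ t :=
    pow_le_pow_of_le_one (by norm_num) (by norm_num) (by omega)
  nlinarith [norm_nonneg (w - 1)]

lemma norm_le_three_halves_of_norm_sub_one_le (hw : ‖w - 1‖ ≤ 1 / 2 - 5 * (2 / 3 : ℝ) ^ t) :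
    ‖w‖ ≤ 3 / 2 := by
  have := norm_le_norm_add_norm_sub' w 1
  rw [norm_one] at this
  nlinarith [pow_pos (by norm_num : (0 : ℝ) < 2 / 3) t]

def rootMap (t : ℕ) (w q : ℂ) : ℂ := (1 + w * denomTail t w q)⁻¹

lemma three_halves_lt_norm_one_add_mul_denomTail
    (hw : ‖w - 1‖ ≤ 1 / 2 - 5 * (2 / 3 : ℝ) ^ t) (hq : ‖q‖ ≤ 2 / 3) :
    3 / 2 < ‖1 + w * denomTail t w q‖ := by
  have hw' := norm_le_three_halves_of_norm_sub_one_le hw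
  have hE := norm_denomTail_sub_one_le (six_le_of_norm_sub_one_le hw) hw' hq
  have hclose : ‖1 + w * denomTail t w q - 2‖ ≤ 1 / 2 - 2 * (2 / 3) ^ t :=
    calc ‖1 + w * denomTail t w q - 2‖ = ‖w * (denomTail t w q - 1) + (w - 1)‖ := by
          congr 1; ring
      _ ≤ ‖w‖ * ‖denomTail t w q - 1‖ + ‖w - 1‖ := by grw [norm_add_le, norm_mul]
      _ ≤ 3 / 2 * (2 * (2 / 3) ^ t) + (1 / 2 - 5 * (2 / 3) ^ t) := by gcongr
      _ = 1 / 2 - 2 * (2 / 3) ^ t := by ring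
  have := norm_le_norm_add_norm_sub' (2 : ℂ) (1 + w * denomTail t w q)
  rw [norm_sub_rev, Complex.norm_two] at this
  nlinarith [pow_pos (by norm_num : (0 : ℝ) < 2 / 3) t]

lemma isFixedPt_rootMap_iff (hw : ‖w - 1‖ ≤ 1 / 2 - 5 * (2 / 3 : ℝ) ^ t) (hq : ‖q‖ ≤ 2 / 3) :
    IsFixedPt (rootMap t w) q ↔ DGF t q w = 0 := by
  have hden : 1 + w * denomTail t w q ≠ 0 :=
    norm_pos_iff.1 ((by norm_num : (0 : ℝ) < 3 / 2).trans
      (three_halves_lt_norm_one_add_mul_denomTail hw hq))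
  have hq1 : 1 - q ≠ 0 := sub_ne_zero.2 fun h => by norm_num [← h] at hq
  have hD : 1 - w * (q / (1 - q)) * denomTail t w q
      = (1 - q * (1 + w * denomTail t w q)) / (1 - q) := by
    field_simp
    ring
  rw [DGF_eq_one_sub_mul_denomTail (six_le_of_norm_sub_one_le hw)
    (norm_le_three_halves_of_norm_sub_one_le hw) hq, hD, div_eq_zero_iff, or_iff_left hq1,
    sub_eq_zero, IsFixedPt, rootMap, ← mul_eq_one_iff_inv_eq₀ hden, mul_comm, eq_comm]

lemma mapsTo_rootMap (hw : ‖w - 1‖ ≤ 1 / 2 - 5 * (2 / 3 : ℝ) ^ t) :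
    Set.MapsTo (rootMap t w) (closedBall 0 (2 / 3)) (ball 0 (2 / 3)) := fun q hq => by
  have := three_halves_lt_norm_one_add_mul_denomTail hw (mem_closedBall_zero_iff.1 hq)
  rw [mem_ball_zero_iff, rootMap, norm_inv, inv_lt_comm₀ (by linarith) (by norm_num)]
  linarith

lemma lipschitzOnWith_rootMap (hw : ‖w - 1‖ ≤ 1 / 2 - 5 * (2 / 3 : ℝ) ^ t) :
    LipschitzOnWith (13 / 15) (rootMap t w) (closedBall 0 (2 / 3)) := by
  refine LipschitzOnWith.of_dist_le_mul fun q hq q' hq' => ?_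
  rw [mem_closedBall_zero_iff] at hq hq'
  have hw' := norm_le_three_halves_of_norm_sub_one_le hw
  have hE := norm_denomTail_sub_denomTail_le (six_le_of_norm_sub_one_le hw) hw' hq' hq
  rw [norm_sub_rev q'] at hE
  have h := three_halves_lt_norm_one_add_mul_denomTail hw hq
  have h' := three_halves_lt_norm_one_add_mul_denomTail hw hq'
  rw [dist_eq_norm, dist_eq_norm, rootMap, rootMap, inv_sub_inv (norm_pos_iff.1 (by linarith))
    (norm_pos_iff.1 (by linarith)), add_sub_add_left_eq_sub, ← mul_sub, norm_div, norm_mul,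
    norm_mul, div_le_iff₀ (by positivity)]
  push_cast
  calc ‖w‖ * ‖denomTail t w q' - denomTail t w q‖ ≤ 3 / 2 * (13 / 10 * ‖q - q'‖) := by gcongr
    _ = 13 / 15 * ‖q - q'‖ * (3 / 2 * (3 / 2)) := by ring
    _ ≤ 13 / 15 * ‖q - q'‖ * (‖1 + w * denomTail t w q‖ * ‖1 + w * denomTail t w q'‖) := by
        gcongr

end RootMap

theorem unique_root_of_denominator_general (t : ℕ) (w : ℂ)
    (hw : ‖w - 1‖ ≤ 1/2 - 5 * (2/3 : ℝ) ^ t) :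
    (∃! q : ℂ, ‖q‖ < 2/3 ∧ DGF t q w = 0) ∧
    ∀ q : ℂ, ‖q‖ = 2/3 → DGF t q w ≠ 0 := by
  obtain ⟨q₀, ⟨hq₀, hfix⟩, huniq⟩ := exists_unique_isFixedPt_of_mapsTo_ball (by norm_num)
    (by rw [← NNReal.coe_lt_coe]; norm_num) (lipschitzOnWith_rootMap hw) (mapsTo_rootMap hw)
  rw [mem_ball_zero_iff] at hq₀
  refine ⟨⟨q₀, ⟨hq₀, (isFixedPt_rootMap_iff hw hq₀.le).1 hfix⟩, fun q ⟨hq, hroot⟩ =>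
    huniq q ⟨mem_ball_zero_iff.2 hq, (isFixedPt_rootMap_iff hw hq.le).2 hroot⟩⟩,
    fun q hq hroot => ?_⟩
  have hfixq : rootMap t w q = q := (isFixedPt_rootMap_iff hw hq.le).2 hroot
  have := mapsTo_rootMap hw (mem_closedBall_zero_iff.2 hq.le)
  rw [hfixq, mem_ball_zero_iff, hq] at this
  exact lt_irrefl _ this

/-- For `t ≥ 5` and `|w − 1| ≤ 1/2 − 5·(2/3)^t`, the function
`q ↦ D(q,w)` has exactly one zero in the open disc `|q| < 2/3` and no zero on the
circle `|q| = 2/3`. -/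
theorem unique_root_of_denominator (t : ℕ) (ht : 5 ≤ t) (w : ℂ)
    (hw : ‖w - 1‖ ≤ 1/2 - 5 * (2/3 : ℝ) ^ t) :
    (∃! q : ℂ, ‖q‖ < 2/3 ∧ DGF t q w = 0) ∧
    ∀ q : ℂ, ‖q‖ = 2/3 → DGF t q w ≠ 0 :=
  unique_root_of_denominator_general t w hw
end
end
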